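/- arXiv:2212.13804 — 2 statements merged into one kernel-verified Lean document; each statement's English description precedes it below -/
import Mathlib

section
/- Existence of a Nash equilibrium for the game G(α). Fix reals ρ_min, ρ_max with 0 < ρ_min ≤ ρ_max. Then there exists a power profile ρ* : Fin K → ℝ with ρ* k ∈ [ρ_min, ρ_max] for all k, such that for every user k and every ρ_k ∈ [ρ_min, ρ_max], μ_k(ρ*) ≤ μ_k(Function.update ρ* k ρ_k); i.e., the parameterized game G(α) with strategy sets [ρ_min, ρ_max] and payoffs μ_k (to be minimized) possesses a Nash equilibrium. -/
/-- ξ k = ρ k * (b k)^α -/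
noncomputable def xi (K : ℕ) (α : ℝ) (b ρ : Fin K → ℝ) (k : Fin K) : ℝ :=
  ρ k * b k ^ α

/-- Payoff of user k: μ_k(ρ) = (Σ_{i ≠ k} ξ i) / ξ k + ξ k * Σ_{i ≠ k} 1 / ξ i -/
noncomputable def mu (K : ℕ) (α : ℝ) (b ρ : Fin K → ℝ) (k : Fin K) : ℝ :=
  (∑ i ∈ Finset.univ.erase k, xi K α b ρ i) / xi K α b ρ k
    + xi K α b ρ k * ∑ i ∈ Finset.univ.erase k, 1 / xi K α b ρ i

/-- Potential function u(ρ) = (1/2) * Σ_k μ_k(ρ) -/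
noncomputable def potential (K : ℕ) (α : ℝ) (b ρ : Fin K → ℝ) : ℝ :=
  (1 / 2) * ∑ k, mu K α b ρ k

lemma mu_eq (K : ℕ) (α : ℝ) (b ρ : Fin K → ℝ) (k : Fin K) :
    mu K α b ρ k = (∑ i ∈ Finset.univ.erase k, xi K α b ρ i / xi K α b ρ k)
      + ∑ i ∈ Finset.univ.erase k, xi K α b ρ k / xi K α b ρ i := by
  unfold mu
  rw [Finset.sum_div, Finset.mul_sum]
  simp only [mul_one_div]

lemma pot_eq (K : ℕ) (α : ℝ) (b ρ : Fin K → ℝ) :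
    potential K α b ρ = ∑ j, ∑ i ∈ Finset.univ.erase j, xi K α b ρ i / xi K α b ρ j := by
  unfold potential
  have hswap : ∑ j, ∑ i ∈ Finset.univ.erase j, xi K α b ρ j / xi K α b ρ i
      = ∑ j, ∑ i ∈ Finset.univ.erase j, xi K α b ρ i / xi K α b ρ j := by
    rw [Finset.sum_comm' (t' := Finset.univ) (s' := fun i => Finset.univ.erase i)]
    intro x y
    simp [Finset.mem_erase, eq_comm]
  calc (1/2 : ℝ) * ∑ k, mu K α b ρ k
      = (1/2) * ∑ k, ((∑ i ∈ Finset.univ.erase k, xi K α b ρ i / xi K α b ρ k)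
          + ∑ i ∈ Finset.univ.erase k, xi K α b ρ k / xi K α b ρ i) := by
        simp_rw [mu_eq]
    _ = (1/2) * ((∑ k, ∑ i ∈ Finset.univ.erase k, xi K α b ρ i / xi K α b ρ k)
          + ∑ k, ∑ i ∈ Finset.univ.erase k, xi K α b ρ k / xi K α b ρ i) := by
        rw [Finset.sum_add_distrib]
    _ = _ := by rw [hswap]; ring

lemma pot_split (K : ℕ) (α : ℝ) (b ρ : Fin K → ℝ) (k : Fin K) :
    potential K α b ρ = mu K α b ρ k
      + ∑ j ∈ Finset.univ.erase k, ∑ i ∈ (Finset.univ.erase j).erase k,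
          xi K α b ρ i / xi K α b ρ j := by
  rw [pot_eq, mu_eq]
  rw [← Finset.add_sum_erase _ _ (Finset.mem_univ k)]
  have h2 : ∀ j ∈ Finset.univ.erase k,
      ∑ i ∈ Finset.univ.erase j, xi K α b ρ i / xi K α b ρ j
        = xi K α b ρ k / xi K α b ρ j
          + ∑ i ∈ (Finset.univ.erase j).erase k, xi K α b ρ i / xi K α b ρ j := by
    intro j hj
    rw [Finset.mem_erase] at hj
    rw [← Finset.add_sum_erase _ (fun i => xi K α b ρ i / xi K α b ρ j)
      (Finset.mem_erase.mpr ⟨Ne.symm hj.1, Finset.mem_univ k⟩)]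
  rw [Finset.sum_congr rfl h2, Finset.sum_add_distrib]
  ring

lemma xi_update_ne (K : ℕ) (α : ℝ) (b ρ : Fin K → ℝ) (k i : Fin K) (x : ℝ) (hik : i ≠ k) :
    xi K α b (Function.update ρ k x) i = xi K α b ρ i := by
  unfold xi; rw [Function.update_of_ne hik]

/-- Existence of a Nash equilibrium for G(α) with strategy sets [ρ_min, ρ_max]. -/
theorem exists_nash_equilibrium (K : ℕ) (hK : 2 ≤ K) (α : ℝ) (b : Fin K → ℝ)
    (hb : ∀ k, 0 < b k) (ρmin ρmax : ℝ) (hmin : 0 < ρmin) (hle : ρmin ≤ ρmax) :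
    ∃ ρstar : Fin K → ℝ, (∀ k, ρstar k ∈ Set.Icc ρmin ρmax) ∧
      ∀ (k : Fin K), ∀ ρk ∈ Set.Icc ρmin ρmax,
        mu K α b ρstar k ≤ mu K α b (Function.update ρstar k ρk) k := by
  set S : Set (Fin K → ℝ) := Set.pi Set.univ (fun _ => Set.Icc ρmin ρmax) with hS
  have hSc : IsCompact S := isCompact_univ_pi (fun _ => isCompact_Icc)
  have hSne : S.Nonempty := ⟨fun _ => ρmin, fun i _ => ⟨le_refl _, hle⟩⟩
  have hcont : ContinuousOn (potential K α b) S := by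
    have : ContinuousOn
        (fun ρ => ∑ j, ∑ i ∈ Finset.univ.erase j, xi K α b ρ i / xi K α b ρ j) S := by
      apply continuousOn_finset_sum
      intro j _
      apply continuousOn_finset_sum
      intro i _
      apply ContinuousOn.div
      · exact ((continuous_apply i).mul continuous_const).continuousOn
      · exact ((continuous_apply j).mul continuous_const).continuousOn
      · intro ρ hρ
        have h1 : 0 < ρ j := lt_of_lt_of_le hmin (hρ j (Set.mem_univ j)).1
        have h2 : 0 < b j ^ α := Real.rpow_pos_of_pos (hb j) α
        exact ne_of_gt (mul_pos h1 h2)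
    exact this.congr (fun ρ _ => pot_eq K α b ρ)
  obtain ⟨ρstar, hρS, hmin'⟩ := hSc.exists_isMinOn hSne hcont
  refine ⟨ρstar, fun k => hρS k (Set.mem_univ k), ?_⟩
  intro k x hx
  have hup : Function.update ρstar k x ∈ S := by
    intro i _
    rcases eq_or_ne i k with rfl | h
    · simpa using hx
    · rw [Function.update_of_ne h]; exact hρS i (Set.mem_univ i)
  have hpot : potential K α b ρstar ≤ potential K α b (Function.update ρstar k x) := hmin' hup
  have hC : ∑ j ∈ Finset.univ.erase k, ∑ i ∈ (Finset.univ.erase j).erase k,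
      xi K α b (Function.update ρstar k x) i / xi K α b (Function.update ρstar k x) j
      = ∑ j ∈ Finset.univ.erase k, ∑ i ∈ (Finset.univ.erase j).erase k,
      xi K α b ρstar i / xi K α b ρstar j := by
    apply Finset.sum_congr rfl
    intro j hj
    apply Finset.sum_congr rfl
    intro i hi
    rw [xi_update_ne _ _ _ _ _ _ _ (Finset.mem_erase.mp hj).1,
      xi_update_ne _ _ _ _ _ _ _ (Finset.mem_erase.mp hi).1]
  have e1 := pot_split K α b ρstar k
  have e2 := pot_split K α b (Function.update ρstar k x) k
  rw [e1, e2, hC] at hpot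
  linarith
end

section
/- The best response is the unique positive critical point. Fix a user k and positive powers ρ_i > 0 for all i ≠ k, and let f(x) = μ_k(Function.update ρ k x) for x > 0. Then f is differentiable on (0, ∞), its derivative vanishes at ρ*_k = sqrt( (Σ_{i ≠ k} ρ_i (b i)^α) / (Σ_{i ≠ k} (b k)^{2α} / (ρ_i (b i)^α)) ), and ρ*_k is the only positive real at which the derivative of f vanishes. -/
/-!
With the other users' powers fixed, `x ↦ μ_k(ρ[k ↦ x])` is `A / x + B x` with
`A = (Σ_{i ≠ k} ξ i) / (b k)^α` and `B = (b k)^α Σ_{i ≠ k} 1 / ξ i`, both positive once there is a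
second user. Its derivative `B - A / x²` vanishes on `(0, ∞)` exactly at `x = √(A / B)`.
-/

open Finset

theorem sum_erase_pos {ι M : Type*} [Fintype ι] [DecidableEq ι] [Nontrivial ι]
    [AddCommMonoid M] [PartialOrder M] [IsOrderedCancelAddMonoid M]
    {f : ι → M} (k : ι) (hf : ∀ i, i ≠ k → 0 < f i) : 0 < ∑ i ∈ univ.erase k, f i := by
  obtain ⟨j, hj⟩ := exists_ne k
  exact sum_pos (fun i hi => hf i (ne_of_mem_erase hi)) ⟨j, mem_erase.2 ⟨hj, mem_univ j⟩⟩

section InvAddLinear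

variable {a c x : ℝ}

theorem hasDerivAt_mul_inv_add_mul (hx : x ≠ 0) :
    HasDerivAt (fun x => a * x⁻¹ + c * x) (c - a / x ^ 2) x :=
  (((hasDerivAt_inv hx).const_mul a).add (hasDerivAt_id' x |>.const_mul c)).congr_deriv (by ring)

theorem deriv_mul_inv_add_mul_eq_zero_iff (hc : c ≠ 0) (hx : 0 < x) :
    deriv (fun x => a * x⁻¹ + c * x) x = 0 ↔ x = √(a / c) := by
  rw [(hasDerivAt_mul_inv_add_mul hx.ne').deriv, sub_eq_zero]
  constructor
  · intro h
    have ha : a ≠ 0 := fun ha => hc (by rw [h, ha, zero_div])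
    rw [h, div_div_cancel₀ ha, Real.sqrt_sq hx.le]
  · rintro rfl
    have hac : 0 < a / c := Real.sqrt_pos.1 hx
    rw [Real.sq_sqrt hac.le, div_div_cancel₀ (div_ne_zero_iff.1 hac.ne').1]

end InvAddLinear

theorem mu_update_self (K : ℕ) (α : ℝ) (b ρ : Fin K → ℝ) (k : Fin K) (x : ℝ) :
    mu K α b (Function.update ρ k x) k =
      (∑ i ∈ univ.erase k, ρ i * b i ^ α) / b k ^ α * x⁻¹
        + b k ^ α * (∑ i ∈ univ.erase k, 1 / (ρ i * b i ^ α)) * x := by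
  have hxi : ∀ i ∈ univ.erase k, xi K α b (Function.update ρ k x) i = ρ i * b i ^ α :=
    fun i hi => by rw [xi, Function.update_of_ne (ne_of_mem_erase hi)]
  rw [mu, sum_congr rfl hxi, sum_congr rfl fun i hi => congrArg (1 / ·) (hxi i hi)]
  simp only [xi, Function.update_self]
  ring

/-- The best response is the unique positive critical point of
    f(x) = μ_k(Function.update ρ k x). -/
theorem best_response_unique_critical_point (K : ℕ) (hK : 2 ≤ K) (α : ℝ)
    (b : Fin K → ℝ) (hb : ∀ k, 0 < b k) (k : Fin K) (ρ : Fin K → ℝ)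
    (hρ : ∀ i, i ≠ k → 0 < ρ i) :
    (∀ x ∈ Set.Ioi (0 : ℝ),
      DifferentiableAt ℝ (fun x : ℝ => mu K α b (Function.update ρ k x) k) x) ∧
    deriv (fun x : ℝ => mu K α b (Function.update ρ k x) k)
      (Real.sqrt ((∑ i ∈ Finset.univ.erase k, ρ i * b i ^ α) /
        (∑ i ∈ Finset.univ.erase k, b k ^ (2 * α) / (ρ i * b i ^ α)))) = 0 ∧
    (∀ x : ℝ, 0 < x →
      deriv (fun x : ℝ => mu K α b (Function.update ρ k x) k) x = 0 →
      x = Real.sqrt ((∑ i ∈ Finset.univ.erase k, ρ i * b i ^ α) /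
        (∑ i ∈ Finset.univ.erase k, b k ^ (2 * α) / (ρ i * b i ^ α)))) := by
  have : Nontrivial (Fin K) := Fin.nontrivial_iff_two_le.mpr hK
  set S := ∑ i ∈ univ.erase k, ρ i * b i ^ α
  set T := ∑ i ∈ univ.erase k, 1 / (ρ i * b i ^ α)
  have hξ : ∀ i, i ≠ k → 0 < ρ i * b i ^ α :=
    fun i hi => mul_pos (hρ i hi) (Real.rpow_pos_of_pos (hb i) α)
  have hS : 0 < S := sum_erase_pos k hξ
  have hT : 0 < T := sum_erase_pos k fun i hi => one_div_pos.2 (hξ i hi)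
  have hc : 0 < b k ^ α := Real.rpow_pos_of_pos (hb k) α
  have hden : ∑ i ∈ univ.erase k, b k ^ (2 * α) / (ρ i * b i ^ α) = b k ^ α * (b k ^ α * T) := by
    rw [mul_sum, mul_sum]
    refine sum_congr rfl fun i _ => ?_
    rw [two_mul, Real.rpow_add (hb k)]
    ring
  have hB : b k ^ α * T ≠ 0 := (mul_pos hc hT).ne'
  rw [funext (mu_update_self K α b ρ k), hden, ← div_div]
  refine ⟨fun x hx => (hasDerivAt_mul_inv_add_mul (ne_of_gt hx)).differentiableAt,
    ?_, fun x hx => (deriv_mul_inv_add_mul_eq_zero_iff hB hx).1⟩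
  exact (deriv_mul_inv_add_mul_eq_zero_iff hB (Real.sqrt_pos.2 (by positivity))).2 rfl
end
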